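/- arXiv:1009.4950 — 4 statements merged into one kernel-verified Lean document; each statement's English description precedes it below -/
import Mathlib

section
/- The priority-based evacuation diverge fluxes qᵢ = min{Sᵢ, max{D₀ − S_j, αᵢ D₀}} with α₁ + α₂ = 1, αᵢ ∈ [0,1], satisfy q₁ + q₂ = min{D₀, S₁ + S₂}. -/
theorem priority_evacuation_conservation
    (D₀ S₁ S₂ α₁ α₂ : ℝ)
    (hD₀ : 0 ≤ D₀) (hS₁ : 0 ≤ S₁) (hS₂ : 0 ≤ S₂)
    (hα₁ : α₁ ∈ Set.Icc (0:ℝ) 1) (hα₂ : α₂ ∈ Set.Icc (0:ℝ) 1)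
    (hα : α₁ + α₂ = 1) :
    min S₁ (max (D₀ - S₂) (α₁ * D₀)) + min S₂ (max (D₀ - S₁) (α₂ * D₀))
      = min D₀ (S₁ + S₂) := by
  obtain ⟨h1, h2⟩ := hα₁
  obtain ⟨h3, h4⟩ := hα₂
  have ha : 0 ≤ α₁ * D₀ := mul_nonneg h1 hD₀
  have hb : 0 ≤ α₂ * D₀ := mul_nonneg h3 hD₀
  have hsum : α₁ * D₀ + α₂ * D₀ = D₀ := by
    rw [← add_mul, hα, one_mul]
  set a := α₁ * D₀ with ha'
  set b := α₂ * D₀ with hb'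
  simp only [min_def, max_def]
  split_ifs <;> linarith
end

section
/- In the partial evacuation model, the fluxes qᵢ = min{Sᵢ, (1/ξ_j) S_j − S_j, max{D₀ − S_j, αᵢ D₀}} with ξ₁ + ξ₂ ≤ 1, αᵢ ∈ [ξᵢ, 1 − ξ_j], α₁ + α₂ = 1, satisfy the FIFO lower bound qᵢ ≥ ξᵢ (q₁ + q₂) for i = 1, 2. -/
/-!
Writing `q, q'` for the two fluxes, the bound `ξ (q + q') ≤ q` is `ξ q' ≤ (1 - ξ) q`, checked on the
term realising the minimum in `q`. If `q = S`, it is the cap `q' ≤ (1 - ξ)/ξ · S`. If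
`q = (1 - ξ')/ξ' · S'`, it follows from `q' ≤ S'` and `ξ ξ' ≤ (1 - ξ)(1 - ξ')`, i.e. `ξ + ξ' ≤ 1`.
Otherwise `q = max (D - S', α D) ≤ S`, so `q ≥ ξ D`, while either `q + q' ≤ D` or
`q' ≤ α' D ≤ (1 - ξ) D`.
-/

/-- `qᵢ = evacFlux D₀ Sᵢ Sⱼ ξⱼ αᵢ`. -/
noncomputable def evacFlux (D S S' ξ' α : ℝ) : ℝ :=
  min S (min ((1 - ξ') / ξ' * S') (max (D - S') (α * D)))

section

variable {D S S' ξ ξ' α α' : ℝ}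

lemma mul_le_one_sub_mul_max_of_le (hD : 0 ≤ D) (hξ : 0 < ξ) (hξ1 : ξ ≤ 1) (hα : ξ ≤ α)
    (hα' : α' ≤ 1 - ξ) {q' : ℝ} (hMS : max (D - S') (α * D) ≤ S)
    (hq' : q' ≤ max (D - S) (α' * D)) :
    ξ * q' ≤ (1 - ξ) * max (D - S') (α * D) := by
  set M := max (D - S') (α * D)
  have hξD : ξ * D ≤ M := (mul_le_mul_of_nonneg_right hα hD).trans (le_max_right _ _)
  rcases le_max_iff.1 hq' with hq' | hq'
  · have : ξ * q' ≤ ξ * (D - M) := mul_le_mul_of_nonneg_left (by linarith) hξ.le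
    linarith
  · calc ξ * q' ≤ ξ * ((1 - ξ) * D) :=
          mul_le_mul_of_nonneg_left (hq'.trans (mul_le_mul_of_nonneg_right hα' hD)) hξ.le
      _ = (1 - ξ) * (ξ * D) := by ring
      _ ≤ (1 - ξ) * M := mul_le_mul_of_nonneg_left hξD (by linarith)

lemma evacFlux_fifo (hD : 0 ≤ D) (hS' : 0 ≤ S') (hξ : 0 < ξ) (hξ' : 0 < ξ') (hsum : ξ + ξ' ≤ 1)
    (hα : ξ ≤ α) (hα' : α' ≤ 1 - ξ) :
    ξ * (evacFlux D S S' ξ' α + evacFlux D S' S ξ α') ≤ evacFlux D S S' ξ' α := by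
  set q' := evacFlux D S' S ξ α'
  suffices ξ * q' ≤ (1 - ξ) * evacFlux D S S' ξ' α by linarith
  have hq'S' : q' ≤ S' := min_le_left _ _
  have hq'S : ξ * q' ≤ (1 - ξ) * S := by
    have : q' ≤ (1 - ξ) / ξ * S := (min_le_right _ _).trans (min_le_left _ _)
    rwa [div_mul_eq_mul_div, le_div_iff₀ hξ, mul_comm] at this
  have hq'D : q' ≤ max (D - S) (α' * D) := (min_le_right _ _).trans (min_le_right _ _)
  unfold evacFlux
  rcases le_total S (min ((1 - ξ') / ξ' * S') (max (D - S') (α * D))) with hS | hS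
  · rwa [min_eq_left hS]
  rw [min_eq_right hS]
  rcases le_total ((1 - ξ') / ξ' * S') (max (D - S') (α * D)) with hA | hA
  · rw [min_eq_left hA]
    have hshares : ξ ≤ (1 - ξ) * (1 - ξ') / ξ' := by rw [le_div_iff₀ hξ']; nlinarith
    calc ξ * q' ≤ ξ * S' := mul_le_mul_of_nonneg_left hq'S' hξ.le
      _ ≤ (1 - ξ) * (1 - ξ') / ξ' * S' := mul_le_mul_of_nonneg_right hshares hS'
      _ = (1 - ξ) * ((1 - ξ') / ξ' * S') := by ring
  · rw [min_eq_right hA] at hS ⊢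
    exact mul_le_one_sub_mul_max_of_le hD hξ (by linarith) hα hα' hS hq'D

end

theorem partial_evacuation_fifo_bound_general
    (D₀ S₁ S₂ ξ₁ ξ₂ α₁ α₂ : ℝ)
    (hD₀ : 0 ≤ D₀) (hS₁ : 0 ≤ S₁) (hS₂ : 0 ≤ S₂)
    (hξ₁ : ξ₁ ∈ Set.Ioo (0:ℝ) 1) (hξ₂ : ξ₂ ∈ Set.Ioo (0:ℝ) 1)
    (hξ : ξ₁ + ξ₂ ≤ 1)
    (hα₁ : α₁ ∈ Set.Icc ξ₁ (1 - ξ₂)) (hα₂ : α₂ ∈ Set.Icc ξ₂ (1 - ξ₁))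
    (q₁ q₂ : ℝ)
    (hq₁ : q₁ = min S₁ (min ((1 - ξ₂) / ξ₂ * S₂) (max (D₀ - S₂) (α₁ * D₀))))
    (hq₂ : q₂ = min S₂ (min ((1 - ξ₁) / ξ₁ * S₁) (max (D₀ - S₁) (α₂ * D₀)))) :
    ξ₁ * (q₁ + q₂) ≤ q₁ ∧ ξ₂ * (q₁ + q₂) ≤ q₂ := by
  change q₁ = evacFlux D₀ S₁ S₂ ξ₂ α₁ at hq₁
  change q₂ = evacFlux D₀ S₂ S₁ ξ₁ α₂ at hq₂
  subst hq₁ hq₂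
  refine ⟨evacFlux_fifo hD₀ hS₂ hξ₁.1 hξ₂.1 hξ hα₁.1 hα₂.2, ?_⟩
  rw [add_comm]
  exact evacFlux_fifo hD₀ hS₁ hξ₂.1 hξ₁.1 (by linarith) hα₂.1 hα₁.2

theorem partial_evacuation_fifo_bound
    (D₀ S₁ S₂ ξ₁ ξ₂ α₁ α₂ : ℝ)
    (hD₀ : 0 ≤ D₀) (hS₁ : 0 ≤ S₁) (hS₂ : 0 ≤ S₂)
    (hξ₁ : ξ₁ ∈ Set.Ioo (0:ℝ) 1) (hξ₂ : ξ₂ ∈ Set.Ioo (0:ℝ) 1)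
    (hξ : ξ₁ + ξ₂ ≤ 1)
    (hα₁ : α₁ ∈ Set.Icc ξ₁ (1 - ξ₂)) (hα₂ : α₂ ∈ Set.Icc ξ₂ (1 - ξ₁))
    (hα : α₁ + α₂ = 1)
    (q₁ q₂ : ℝ)
    (hq₁ : q₁ = min S₁ (min ((1 - ξ₂) / ξ₂ * S₂) (max (D₀ - S₂) (α₁ * D₀))))
    (hq₂ : q₂ = min S₂ (min ((1 - ξ₁) / ξ₁ * S₁) (max (D₀ - S₁) (α₂ * D₀)))) :
    ξ₁ * (q₁ + q₂) ≤ q₁ ∧ ξ₂ * (q₁ + q₂) ≤ q₂ :=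
  partial_evacuation_fifo_bound_general D₀ S₁ S₂ ξ₁ ξ₂ α₁ α₂ hD₀ hS₁ hS₂ hξ₁ hξ₂ hξ hα₁ hα₂ q₁ q₂
    hq₁ hq₂
end

section
/- When all vehicles have predefined routes (ξ₁ + ξ₂ = 1, so αᵢ = ξᵢ), the partial evacuation fluxes qᵢ = min{Sᵢ, ((1−ξ_j)/ξ_j) S_j, max{D₀ − S_j, ξᵢ D₀}} equal the FIFO fluxes ξᵢ · min{D₀, S₁/ξ₁, S₂/ξ₂}. -/
/-!
Write `F = min (ξ₁ D₀) (min S₁ (ξ₁ / ξ₂ · S₂))` for the FIFO flux `ξ₁ · min D₀ (S₁/ξ₁) (S₂/ξ₂)`.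
The partial evacuation flux differs from `F` only through the term `D₀ − S₂` inside the max, and
that term is never decisive: if `S₂ ≥ ξ₂ D₀` then `D₀ − S₂ ≤ (1 − ξ₂) D₀ = ξ₁ D₀`, while if
`S₂ ≤ ξ₂ D₀` then `ξ₁ / ξ₂ · S₂ ≤ ξ₁ D₀` already realises both minima.
-/

section PartialEvacuation

variable {K : Type*} [Field K] [LinearOrder K] [IsStrictOrderedRing K] {D₀ S₁ S₂ ξ₁ ξ₂ : K}

lemma min_div_mul_max_sub_eq_min (hξ₁ : 0 < ξ₁) (hξ₂ : 0 < ξ₂) (hξ : ξ₁ + ξ₂ = 1) :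
    min (ξ₁ / ξ₂ * S₂) (max (D₀ - S₂) (ξ₁ * D₀)) = min (ξ₁ / ξ₂ * S₂) (ξ₁ * D₀) := by
  rcases le_total (ξ₂ * D₀) S₂ with hS | hS
  · have hle : D₀ - S₂ ≤ ξ₁ * D₀ := by linear_combination hS - D₀ * hξ
    rw [max_eq_right hle]
  · have hle : ξ₁ / ξ₂ * S₂ ≤ ξ₁ * D₀ :=
      calc ξ₁ / ξ₂ * S₂ ≤ ξ₁ / ξ₂ * (ξ₂ * D₀) := by gcongr
        _ = ξ₁ * D₀ := by field_simp
    rw [min_eq_left (hle.trans (le_max_right _ _)), min_eq_left hle]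

lemma mul_min_div_eq (hξ₁ : 0 < ξ₁) :
    ξ₁ * min D₀ (min (S₁ / ξ₁) (S₂ / ξ₂)) = min (ξ₁ * D₀) (min S₁ (ξ₁ / ξ₂ * S₂)) := by
  rw [mul_min_of_nonneg _ _ hξ₁.le, mul_min_of_nonneg _ _ hξ₁.le, mul_div_cancel₀ _ hξ₁.ne',
    mul_div_assoc', div_mul_eq_mul_div]

lemma partial_evacuation_flux_eq_fifo (hξ₁ : 0 < ξ₁) (hξ₂ : 0 < ξ₂) (hξ : ξ₁ + ξ₂ = 1) :
    min S₁ (min (ξ₁ / ξ₂ * S₂) (max (D₀ - S₂) (ξ₁ * D₀)))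
      = ξ₁ * min D₀ (min (S₁ / ξ₁) (S₂ / ξ₂)) := by
  rw [min_div_mul_max_sub_eq_min hξ₁ hξ₂ hξ, mul_min_div_eq hξ₁]
  ac_rfl

end PartialEvacuation

theorem partial_evacuation_reduces_to_fifo_general
    (D₀ S₁ S₂ ξ₁ ξ₂ : ℝ)
    (hξ₁ : 0 < ξ₁) (hξ₂ : 0 < ξ₂) (hξ : ξ₁ + ξ₂ = 1) :
    min S₁ (min (ξ₁ / ξ₂ * S₂) (max (D₀ - S₂) (ξ₁ * D₀)))
      = ξ₁ * min D₀ (min (S₁ / ξ₁) (S₂ / ξ₂)) ∧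
    min S₂ (min (ξ₂ / ξ₁ * S₁) (max (D₀ - S₁) (ξ₂ * D₀)))
      = ξ₂ * min D₀ (min (S₁ / ξ₁) (S₂ / ξ₂)) := by
  refine ⟨partial_evacuation_flux_eq_fifo hξ₁ hξ₂ hξ, ?_⟩
  rw [min_comm (S₁ / ξ₁)]
  exact partial_evacuation_flux_eq_fifo hξ₂ hξ₁ (by rwa [add_comm])

theorem partial_evacuation_reduces_to_fifo
    (D₀ S₁ S₂ ξ₁ ξ₂ : ℝ)
    (hD₀ : 0 ≤ D₀) (hS₁ : 0 ≤ S₁) (hS₂ : 0 ≤ S₂)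
    (hξ₁ : 0 < ξ₁) (hξ₂ : 0 < ξ₂) (hξ : ξ₁ + ξ₂ = 1) :
    min S₁ (min (ξ₁ / ξ₂ * S₂) (max (D₀ - S₂) (ξ₁ * D₀)))
      = ξ₁ * min D₀ (min (S₁ / ξ₁) (S₂ / ξ₂)) ∧
    min S₂ (min (ξ₂ / ξ₁ * S₁) (max (D₀ - S₁) (ξ₂ * D₀)))
      = ξ₂ * min D₀ (min (S₁ / ξ₁) (S₂ / ξ₂)) :=
  partial_evacuation_reduces_to_fifo_general D₀ S₁ S₂ ξ₁ ξ₂ hξ₁ hξ₂ hξ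
end

section
/- For nonnegative reals with S₁ + S₂ > D₀, the supply-proportional fluxes qᵢ = min{Sᵢ, max{D₀ − S_j, (Cᵢ/(C₁+C₂)) D₀}} satisfy q₁ + q₂ = D₀; i.e., when total downstream supply exceeds upstream demand, the evacuation diverge serves all upstream demand. -/
/-!
The two proportional shares `a = C₁/(C₁+C₂) D₀` and `b = C₂/(C₁+C₂) D₀` add up to `D₀`. If both
shares fit into the supplies, each branch receives its share. If, say, `a > S₁`, branch 1
is saturated at `S₁`, and branch 2 receives the remainder `D₀ - S₁`, which exceeds `b`
and fits into `S₂` because `D₀ ≤ S₁ + S₂`.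
-/

section

variable {α : Type*} [AddCommGroup α] [LinearOrder α] [IsOrderedAddMonoid α] {a b D S₁ S₂ : α}

theorem min_max_sub_eq_of_le (hab : a + b = D) (h₁ : a ≤ S₁) (h₂ : b ≤ S₂) :
    min S₁ (max (D - S₂) a) = a := by
  have : D - S₂ ≤ a := sub_le_iff_le_add.2 (hab ▸ add_le_add le_rfl h₂)
  rw [max_eq_right this, min_eq_right h₁]

omit [IsOrderedAddMonoid α] in
theorem min_max_sub_eq_of_lt (h₁ : S₁ < a) : min S₁ (max (D - S₂) a) = S₁ :=
  min_eq_left (le_max_of_le_right h₁.le)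

theorem min_max_sub_eq_sub_of_lt (hab : a + b = D) (h₁ : S₁ < a) (hsum : D ≤ S₁ + S₂) :
    min S₂ (max (D - S₁) b) = D - S₁ := by
  have : b ≤ D - S₁ := le_sub_iff_add_le'.2 (hab ▸ add_le_add h₁.le le_rfl)
  rw [max_eq_left this, min_eq_right (sub_le_iff_le_add'.2 hsum)]

theorem min_max_sub_add_min_max_sub (hab : a + b = D) (hsum : D ≤ S₁ + S₂) :
    min S₁ (max (D - S₂) a) + min S₂ (max (D - S₁) b) = D := by
  have hba : b + a = D := (add_comm b a).trans hab
  rcases lt_or_ge S₁ a with h₁ | h₁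
  · rw [min_max_sub_eq_of_lt h₁, min_max_sub_eq_sub_of_lt hab h₁ hsum, add_sub_cancel]
  rcases lt_or_ge S₂ b with h₂ | h₂
  · rw [min_max_sub_eq_of_lt h₂, min_max_sub_eq_sub_of_lt hba h₂ (hsum.trans_eq (add_comm _ _)),
      sub_add_cancel]
  · rw [min_max_sub_eq_of_le hab h₁ h₂, min_max_sub_eq_of_le hba h₂ h₁, hab]

end

theorem supply_proportional_serves_all_demand_general
    (D₀ S₁ S₂ C₁ C₂ : ℝ)
    (hC : 0 < C₁ + C₂)
    (hsum : D₀ < S₁ + S₂) :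
    min S₁ (max (D₀ - S₂) (C₁ / (C₁ + C₂) * D₀)) +
      min S₂ (max (D₀ - S₁) (C₂ / (C₁ + C₂) * D₀)) = D₀ := by
  have hshares : C₁ / (C₁ + C₂) * D₀ + C₂ / (C₁ + C₂) * D₀ = D₀ := by
    rw [← add_mul, ← add_div, div_self hC.ne', one_mul]
  exact min_max_sub_add_min_max_sub hshares hsum.le

theorem supply_proportional_serves_all_demand
    (D₀ S₁ S₂ C₁ C₂ : ℝ)
    (hD₀ : 0 ≤ D₀) (hS₁ : 0 ≤ S₁) (hS₂ : 0 ≤ S₂)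
    (hC₁ : 0 ≤ C₁) (hC₂ : 0 ≤ C₂) (hC : 0 < C₁ + C₂)
    (hS₁C : S₁ ≤ C₁) (hS₂C : S₂ ≤ C₂) (hDC : D₀ ≤ C₁ + C₂)
    (hsum : D₀ < S₁ + S₂) :
    min S₁ (max (D₀ - S₂) (C₁ / (C₁ + C₂) * D₀)) +
      min S₂ (max (D₀ - S₁) (C₂ / (C₁ + C₂) * D₀)) = D₀ :=
  supply_proportional_serves_all_demand_general D₀ S₁ S₂ C₁ C₂ hC hsum
end
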